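/- arXiv:2509.01191 — 2 statements merged into one kernel-verified Lean document; each statement's English description precedes it below -/
import Mathlib

section
/- Let A be an integral domain and let Q be a cancellative, torsion-free commutative monoid. Let R = A[Q] be the monoid algebra, let 𝔭 be a prime ideal of R, and let F = {q ∈ Q : e^q ∉ 𝔭}, a face of Q. Then for every face G of Q with F ⊆ G, the ideal of the localization R_𝔭 generated by the images of the elements e^q with q ∈ Q∖G is a prime ideal of R_𝔭. -/
/-!
Because `G` is a face, sending `e^q` to `e^q` for `q ∈ G` and to `0` otherwise is a ring map
`A[Q] → A[G]`, and its kernel is the span of the `e^q` with `q ∉ G`. The target is a domain: a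
cancellative torsion-free commutative monoid embeds into a `ℚ`-vector space (the divisible hull of
its Grothendieck group), so it has unique products. That prime ideal is contained in `𝔭` because
`F ⊆ G`, hence it stays prime in `R_𝔭`.
-/

theorem TwoUniqueSums.of_isAddTorsionFree {M : Type*} [AddCommMonoid M] [IsCancelAdd M]
    [IsAddTorsionFree M] : TwoUniqueSums M :=
  .of_injective_addHom
    ((DivisibleHull.coeAddMonoidHom _).comp (Algebra.GrothendieckAddGroup.of (M := M))).toAddHom
    (DivisibleHull.coe_injective.comp Algebra.GrothendieckAddGroup.of_injective) inferInstance

theorem TwoUniqueProds.of_isMulTorsionFree {M : Type*} [CommMonoid M] [IsCancelMul M]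
    [IsMulTorsionFree M] : TwoUniqueProds M :=
  have : TwoUniqueSums (Additive M) := .of_isAddTorsionFree
  Multiplicative.instTwoUniqueProdsOfTwoUniqueSums (M := Additive M)

def Submonoid.IsFace {M : Type*} [Monoid M] (G : Submonoid M) : Prop :=
  ∀ x y, x * y ∈ G → x ∈ G ∧ y ∈ G

namespace MonoidAlgebra

variable {R M : Type*} [CommSemiring R] [Monoid M] {G : Submonoid M}

open Classical in
noncomputable def faceIndicator (hG : G.IsFace) : M →* MonoidAlgebra R G where
  toFun q := if h : q ∈ G then of R G ⟨q, h⟩ else 0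
  map_one' := (dif_pos G.one_mem).trans (map_one (of R G))
  map_mul' x y := by
    by_cases hxy : x * y ∈ G
    · obtain ⟨hx, hy⟩ := hG x y hxy
      simp only [hxy, hx, hy, dif_pos, ← map_mul]
      rfl
    · obtain hx | hy := not_and_or.1 fun h : x ∈ G ∧ y ∈ G => hxy (G.mul_mem h.1 h.2)
      · simp [hxy, hx]
      · simp [hxy, hy]

noncomputable def faceRestriction (hG : G.IsFace) : MonoidAlgebra R M →ₐ[R] MonoidAlgebra R G :=
  lift R (MonoidAlgebra R G) M (faceIndicator hG)

theorem faceRestriction_single_of_mem (hG : G.IsFace) {q : M} (hq : q ∈ G) (r : R) :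
    faceRestriction hG (single q r) = single ⟨q, hq⟩ r := by
  simp [faceRestriction, faceIndicator, hq]

theorem faceRestriction_single_of_notMem (hG : G.IsFace) {q : M} (hq : q ∉ G) (r : R) :
    faceRestriction hG (single q r) = 0 := by
  simp [faceRestriction, faceIndicator, hq]

theorem exists_eq_mapDomain_faceRestriction_add (hG : G.IsFace) (f : MonoidAlgebra R M) :
    ∃ g ∈ Ideal.span (of R M '' {q | q ∉ G}), f = mapDomain (↑) (faceRestriction hG f) + g := by
  induction f using MonoidAlgebra.induction_linear with
  | zero => exact ⟨0, zero_mem _, by simp⟩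
  | add f f' hf hf' =>
    obtain ⟨g, hg, hfg⟩ := hf
    obtain ⟨g', hg', hfg'⟩ := hf'
    refine ⟨g + g', add_mem hg hg', ?_⟩
    rw [map_add, mapDomain_add, add_add_add_comm, ← hfg, ← hfg']
  | single q r =>
    by_cases hq : q ∈ G
    · exact ⟨0, zero_mem _, by simp [faceRestriction_single_of_mem hG hq, mapDomain_single]⟩
    · refine ⟨single q r, ?_, by simp [faceRestriction_single_of_notMem hG hq]⟩
      rw [← mul_one r, ← smul_eq_mul, ← smul_single]
      exact Submodule.smul_of_tower_mem _ r (Ideal.subset_span ⟨q, hq, rfl⟩)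

theorem ker_faceRestriction (hG : G.IsFace) :
    RingHom.ker (faceRestriction (R := R) hG) = Ideal.span (of R M '' {q | q ∉ G}) := by
  refine le_antisymm (fun f hf => ?_) (Ideal.span_le.2 ?_)
  · obtain ⟨g, hg, hfg⟩ := exists_eq_mapDomain_faceRestriction_add hG f
    rw [RingHom.mem_ker.1 hf, mapDomain_zero, zero_add] at hfg
    exact hfg ▸ hg
  · rintro _ ⟨q, hq, rfl⟩
    exact faceRestriction_single_of_notMem hG hq 1

theorem isPrime_span_of_compl_face [IsCancelAdd R] [IsDomain R] [UniqueProds M]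
    (hG : G.IsFace) : (Ideal.span (of R M '' {q | q ∉ G})).IsPrime :=
  have : UniqueProds G :=
    .of_injective_mulHom G.subtype.toMulHom Subtype.val_injective ‹_›
  ker_faceRestriction (R := R) hG ▸ RingHom.ker_isPrime _

end MonoidAlgebra

/-- Let `A` be an integral domain, `Q` a cancellative torsion-free commutative monoid,
`R = A[Q]` the monoid algebra, `𝔭` a prime ideal of `R`, and `F = {q : e^q ∉ 𝔭}` (a face of
`Q`). Then for every face `G` of `Q` containing `F`, the ideal of the localization `R_𝔭`
generated by the images of the elements `e^q` with `q ∉ G` is a prime ideal of `R_𝔭`. -/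
theorem monoidAlgebra_localization_face_ideal_isPrime (A : Type*) [CommRing A] [IsDomain A]
    (Q : Type*) [CommMonoid Q] [IsCancelMul Q]
    (htf : ∀ (n : ℕ), 0 < n → ∀ x y : Q, x ^ n = y ^ n → x = y)
    (𝔭 : Ideal (MonoidAlgebra A Q)) [𝔭.IsPrime]
    (G : Submonoid Q) (hG : ∀ x y : Q, x * y ∈ G → x ∈ G ∧ y ∈ G)
    (hFG : ∀ q : Q, MonoidAlgebra.of A Q q ∉ 𝔭 → q ∈ G) :
    (Ideal.span (algebraMap (MonoidAlgebra A Q) (Localization.AtPrime 𝔭) ''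
        ((fun q => MonoidAlgebra.of A Q q) '' {q : Q | q ∉ G}))).IsPrime := by
  have : IsMulTorsionFree Q := ⟨fun n hn x y => htf n (Nat.pos_of_ne_zero hn) x y⟩
  have : UniqueProds Q := TwoUniqueProds.of_isMulTorsionFree.toUniqueProds
  have : (Ideal.span (MonoidAlgebra.of A Q '' {q | q ∉ G})).IsPrime :=
    MonoidAlgebra.isPrime_span_of_compl_face hG
  have hle : Ideal.span (MonoidAlgebra.of A Q '' {q | q ∉ G}) ≤ 𝔭 := Ideal.span_le.2 <| by
    rintro _ ⟨q, hq, rfl⟩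
    exact not_not.1 (mt (hFG q) hq)
  rw [← Ideal.map_span]
  exact Ideal.isPrime_map_of_isLocalizationAtPrime 𝔭 hle
end

section
/- Let M be a cancellative, root closed commutative monoid. Then the associated reduced monoid M_red (the quotient of M by the congruence identifying associates; in Mathlib terms, Associates M) is cancellative and root closed: whenever classes a, b ∈ M_red and n > 0 satisfy n•a = n•b + q for some q ∈ M_red, there exists q' ∈ M_red with a = b + q'. -/
/-!
Associates are cancellative because a unit relating `a * b` and `a * c` also relates `b` and `c`
once `a` is cancelled. Root closedness passes to `Associates M` because divisibility of classes is
divisibility of representatives (`Associates.mk_dvd_mk`) and `Associates.mk` commutes with powers.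
-/

/-- Root closedness written multiplicatively; `b ∣ a` unfolds to `∃ q, a = b * q`. -/
def IsRootClosed (M : Type*) [Monoid M] : Prop :=
  ∀ (a b : M) (n : ℕ), 0 < n → b ^ n ∣ a ^ n → b ∣ a

theorem Associated.of_mul_left_cancel {M : Type*} [CommMonoid M] [IsLeftCancelMul M]
    {a b c : M} (h : Associated (a * b) (a * c)) : Associated b c := by
  obtain ⟨u, hu⟩ := h
  exact ⟨u, mul_left_cancel (a := a) (by rw [← mul_assoc, hu])⟩

namespace Associates

instance instIsCancelMul {M : Type*} [CommMonoid M] [IsLeftCancelMul M] :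
    IsCancelMul (Associates M) :=
  have : IsLeftCancelMul (Associates M) :=
    ⟨fun a b c (h : a * b = a * c) => by
      obtain ⟨a, rfl⟩ := mk_surjective a
      obtain ⟨b, rfl⟩ := mk_surjective b
      obtain ⟨c, rfl⟩ := mk_surjective c
      rw [mk_mul_mk, mk_mul_mk, mk_eq_mk_iff_associated] at h
      exact mk_eq_mk_iff_associated.2 h.of_mul_left_cancel⟩
  CommMagma.IsLeftCancelMul.toIsCancelMul _

theorem isRootClosed {M : Type*} [CommMonoid M] (h : IsRootClosed M) :
    IsRootClosed (Associates M) := by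
  intro a b n hn hdvd
  obtain ⟨a, rfl⟩ := mk_surjective a
  obtain ⟨b, rfl⟩ := mk_surjective b
  rw [← mk_pow, ← mk_pow, mk_dvd_mk] at hdvd
  exact mk_dvd_mk.2 (h _ _ n hn hdvd)

end Associates

/-- Let `M` be a cancellative, root closed commutative monoid. Then the associated reduced
monoid `M_red = Associates M` (the quotient of `M` by the congruence identifying associates)
is cancellative and root closed: whenever `a ^ n = b ^ n * q` for classes `a, b, q` and `n > 0`,
there exists `q'` with `a = b * q'`. -/
theorem associates_rootClosed_of_rootClosed (M : Type*) [CommMonoid M] [IsCancelMul M]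
    (hrc : ∀ (a b : M) (n : ℕ), 0 < n → (∃ q : M, a ^ n = b ^ n * q) → ∃ q' : M, a = b * q') :
    IsCancelMul (Associates M) ∧
      ∀ (a b : Associates M) (n : ℕ), 0 < n →
        (∃ q : Associates M, a ^ n = b ^ n * q) → ∃ q' : Associates M, a = b * q' :=
  ⟨inferInstance, Associates.isRootClosed hrc⟩
end
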